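/- arXiv:1206.6643 — 3 statements merged into one kernel-verified Lean document; each statement's English description precedes it below -/
import Mathlib

section
/- Let E be a finite-dimensional normed space, L : E → [0,∞) a continuous function satisfying the coercivity bound L(ξ) ≥ C|ξ|^p for some C > 0 and p > 1, and let N ⊆ E be a linear subspace. Then the function L̂(ξ) := inf_{ζ ∈ N} L(ξ + ζ) is continuous on E. -/
/-- If `E` is finite-dimensional, `L : E → [0,∞)` is continuous and `p`-coercive
(`L ξ ≥ C‖ξ‖^p`, `C > 0`, `p > 1`), and `N ⊆ E` is a linear subspace, then
`L̂(ξ) := inf_{ζ ∈ N} L(ξ + ζ)` is continuous. -/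
theorem stmt1 {E : Type*} [NormedAddCommGroup E] [NormedSpace ℝ E] [FiniteDimensional ℝ E]
    (L : E → ℝ) (hL0 : ∀ ξ, 0 ≤ L ξ) (hLcont : Continuous L)
    (C p : ℝ) (hC : 0 < C) (hp : 1 < p)
    (hcoer : ∀ ξ, C * ‖ξ‖ ^ p ≤ L ξ)
    (N : Submodule ℝ E) :
    Continuous (fun ξ : E => ⨅ ζ : N, L (ξ + ζ)) := by
  set F : E → ℝ := fun ξ => ⨅ ζ : N, L (ξ + ζ) with hF
  have hbdd : ∀ ξ : E, BddBelow (Set.range fun ζ : N => L (ξ + ζ)) := by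
    intro ξ
    refine ⟨0, ?_⟩
    rintro x ⟨ζ, rfl⟩
    exact hL0 _
  have hFle : ∀ (ξ : E) (ζ : N), F ξ ≤ L (ξ + ζ) := fun ξ ζ => ciInf_le (hbdd ξ) ζ
  have hFleL : ∀ ξ : E, F ξ ≤ L ξ := by
    intro ξ
    simpa using hFle ξ 0
  rw [continuous_iff_continuousAt]
  intro ξ₀
  rw [Metric.continuousAt_iff]
  intro ε hε
  -- bound on the ball
  obtain ⟨x₀, _, hM⟩ := (isCompact_closedBall ξ₀ 1).exists_isMaxOn
    ⟨ξ₀, by simp⟩ hLcont.continuousOn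
  set M := L x₀ with hMdef
  have hM0 : 0 ≤ M := hL0 _
  set R := max 1 ((M + 1) / C) with hR
  have hnorm_bound : ∀ x : E, L x ≤ M + 1 → ‖x‖ ≤ R := by
    intro x hx
    rcases le_or_gt ‖x‖ 1 with h | h
    · exact le_trans h (le_max_left _ _)
    · have h1 : ‖x‖ ^ (1 : ℝ) ≤ ‖x‖ ^ p :=
        Real.rpow_le_rpow_of_exponent_le h.le hp.le
      rw [Real.rpow_one] at h1
      have h2 : C * ‖x‖ ≤ M + 1 := by
        calc C * ‖x‖ ≤ C * ‖x‖ ^ p := by nlinarith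
          _ ≤ L x := hcoer x
          _ ≤ M + 1 := hx
      have h3 : ‖x‖ ≤ (M + 1) / C := by
        rw [le_div_iff₀ hC]; linarith
      exact le_trans h3 (le_max_right _ _)
  have hR0 : (0 : ℝ) ≤ R := le_trans zero_le_one (le_max_left _ _)
  -- uniform continuity on a big ball
  set K := Metric.closedBall (0 : E) (R + 2) with hK
  have hUC := (isCompact_closedBall (0 : E) (R + 2)).uniformContinuousOn_of_continuous
    hLcont.continuousOn
  rw [Metric.uniformContinuousOn_iff] at hUC
  obtain ⟨δ, hδ, hδ'⟩ := hUC (ε / 2) (by linarith)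
  refine ⟨min δ 1, by positivity, ?_⟩
  intro ξ hξ
  have hξ1 : dist ξ ξ₀ ≤ 1 := le_trans hξ.le (min_le_right _ _)
  have hξδ : dist ξ ξ₀ < δ := lt_of_lt_of_le hξ (min_le_left _ _)
  -- key one-sided estimate
  have key : ∀ a b : E, dist a ξ₀ ≤ 1 → dist b ξ₀ ≤ 1 → dist a b < δ →
      F a ≤ F b + 3 * ε / 4 := by
    intro a b ha hb hab
    have hεm : (0 : ℝ) < min (ε / 4) 1 := by positivity
    have hlt : F b < F b + min (ε / 4) 1 := by linarith
    obtain ⟨ζ, hζ⟩ := exists_lt_of_ciInf_lt hlt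
    have hbK : L b ≤ M := hM (by simpa [Metric.mem_closedBall] using hb)
    have hFbM : F b ≤ M := le_trans (hFleL b) hbK
    have hLbζ : L (b + ζ) ≤ M + 1 := by
      have : min (ε / 4) 1 ≤ 1 := min_le_right _ _
      linarith [hζ.le]
    have hnb : ‖b + ζ‖ ≤ R := hnorm_bound _ hLbζ
    have hna : ‖a + ζ‖ ≤ R + 2 := by
      have : ‖a + ζ‖ ≤ ‖a - b‖ + ‖b + ζ‖ := by
        have : a + (ζ : E) = (a - b) + (b + ζ) := by abel
        rw [this]; exact norm_add_le _ _
      have hab2 : ‖a - b‖ ≤ 2 := by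
        rw [← dist_eq_norm]
        calc dist a b ≤ dist a ξ₀ + dist ξ₀ b := dist_triangle _ _ _
          _ ≤ 1 + 1 := by rw [dist_comm ξ₀ b]; linarith
          _ = 2 := by norm_num
      linarith
    have haK : a + (ζ : E) ∈ K := by
      simpa [hK, Metric.mem_closedBall, dist_eq_norm] using hna
    have hbK' : b + (ζ : E) ∈ K := by
      simp only [hK, Metric.mem_closedBall, dist_eq_norm, sub_zero]
      linarith
    have hdab : dist (a + (ζ : E)) (b + ζ) < δ := by
      simpa [dist_eq_norm, add_sub_add_right_eq_sub] using hab
    have huc := hδ' _ haK _ hbK' hdab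
    rw [Real.dist_eq] at huc
    have h1 : L (a + ζ) < L (b + ζ) + ε / 2 := by
      have := abs_lt.mp huc
      linarith [this.1, this.2]
    have h2 : min (ε / 4) 1 ≤ ε / 4 := min_le_left _ _
    exact le_of_lt <| calc F a ≤ L (a + ζ) := hFle a ζ
      _ < L (b + ζ) + ε / 2 := h1
      _ < F b + min (ε / 4) 1 + ε / 2 := by linarith
      _ ≤ F b + 3 * ε / 4 := by linarith
  have k1 := key ξ ξ₀ hξ1 (by simp) hξδ
  have k2 := key ξ₀ ξ (by simp) hξ1 (by rwa [dist_comm])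
  rw [Real.dist_eq, abs_lt]
  constructor <;> linarith
end

section
/- Let X be a metric space and S : O(X) → [0,∞] an increasing set function on open sets with S(∅) = 0, S superadditive on disjoint open sets, S subadditive on open sets, and dominated by a finite Borel (Radon) measure ν (S(A) ≤ ν(A) for all open A). Then S extends uniquely to a finite Borel measure on X that is absolutely continuous with respect to ν. (De Giorgi–Letta lemma.) -/
open MeasureTheory ENNReal

/-!
Extend `S` to all sets by `E ↦ ⨅ {S U | U open, E ⊆ U}`. Finite subadditivity, the
domination `S ≤ ν` and the inner regularity of `ν` by closed sets give
`S W ≤ S V + ν (W \ V)` for open `V ⊆ W`; exhausting `⋃ Uₙ` by its finite unions then yields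
countable subadditivity of `S` on open sets, so the extension is an outer measure agreeing with
`S` on open sets. Superadditivity on disjoint open sets makes it a metric outer measure, so Borel
sets are Carathéodory measurable. The resulting measure is dominated by `ν` on open sets, hence
everywhere by outer regularity, and a finite Borel measure is determined by its values on the
π-system of open sets.
-/

open Set Filter Topology

theorem Metric.AreSeparated.separatedNhds {X : Type*} [PseudoEMetricSpace X] {s t : Set X}
    (h : Metric.AreSeparated s t) : SeparatedNhds s t := by
  obtain ⟨r, hr, hst⟩ := h
  refine ⟨⋃ x ∈ s, Metric.eball x (r / 2), ⋃ y ∈ t, Metric.eball y (r / 2),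
    isOpen_biUnion fun _ _ => Metric.isOpen_eball, isOpen_biUnion fun _ _ => Metric.isOpen_eball,
    fun x hx => mem_biUnion hx (Metric.mem_eball_self (ENNReal.half_pos hr)),
    fun y hy => mem_biUnion hy (Metric.mem_eball_self (ENNReal.half_pos hr)), ?_⟩
  refine Set.disjoint_left.2 fun z hzs hzt => ?_
  obtain ⟨x, hx, hzx⟩ := mem_iUnion₂.1 hzs
  obtain ⟨y, hy, hzy⟩ := mem_iUnion₂.1 hzt
  have : edist x y < r := calc
    edist x y ≤ edist z x + edist z y := edist_triangle_left _ _ _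
    _ < r / 2 + r / 2 := ENNReal.add_lt_add hzx hzy
    _ = r := ENNReal.add_halves r
  exact (hst x hx y hy).not_gt this

theorem MeasureTheory.Measure.le_of_forall_isOpen_le {X : Type*} [TopologicalSpace X]
    [MeasurableSpace X] {μ ν : Measure X} [ν.OuterRegular]
    (h : ∀ U, IsOpen U → μ U ≤ ν U) : μ ≤ ν :=
  Measure.le_intro fun s _ _ => by
    rw [s.measure_eq_iInf_isOpen ν]
    exact le_iInf₂ fun U hsU => le_iInf fun hU => (measure_mono hsU).trans (h U hU)

theorem MeasureTheory.Measure.ext_of_forall_isOpen {X : Type*} [TopologicalSpace X]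
    [MeasurableSpace X] [BorelSpace X] {μ ν : Measure X} [IsFiniteMeasure μ]
    (h : ∀ U, IsOpen U → μ U = ν U) : μ = ν :=
  ext_of_generate_finite _ (BorelSpace.measurable_eq (α := X)) isPiSystem_isOpen h
    (h univ isOpen_univ)

theorem isOpen_accumulate {α X : Type*} [LE α] [TopologicalSpace X] {s : α → Set X}
    (hs : ∀ i, IsOpen (s i)) (x : α) : IsOpen (accumulate s x) := by
  rw [accumulate_def]
  exact isOpen_biUnion fun i _ => hs i

namespace DeGiorgiLetta

variable {X : Type*} {S : Set X → ℝ≥0∞}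

section Topological

variable [TopologicalSpace X]

section Subadditive

variable (hsub : ∀ A B : Set X, IsOpen A → IsOpen B → S (A ∪ B) ≤ S A + S B)
include hsub

theorem apply_accumulate_le_sum {U : ℕ → Set X} (hU : ∀ n, IsOpen (U n)) (n : ℕ) :
    S (accumulate U n) ≤ ∑ i ∈ Finset.range (n + 1), S (U i) := by
  induction n with
  | zero => simp
  | succ n ih =>
    rw [accumulate_succ, Finset.sum_range_succ]
    exact (hsub _ _ (isOpen_accumulate hU n) (hU _)).trans (by grw [ih])

variable [MeasurableSpace X] [OpensMeasurableSpace X] {ν : Measure X} [IsFiniteMeasure ν]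
  [ν.WeaklyRegular] (hdom : ∀ A : Set X, IsOpen A → S A ≤ ν A)
include hdom

theorem apply_le_add_measure_sdiff {V W : Set X} (hV : IsOpen V) (hW : IsOpen W)
    (hVW : V ⊆ W) : S W ≤ S V + ν (W \ V) := by
  refine ENNReal.le_of_forall_pos_le_add fun ε hε _ => ?_
  obtain ⟨C, hCV, hC, hνC⟩ := hV.measurableSet.exists_isClosed_sdiff_lt (measure_ne_top ν V)
    (ENNReal.coe_ne_zero.2 hε.ne')
  have hWC : V ∪ (W \ C) = W := by
    refine (union_subset hVW sdiff_subset).antisymm fun x hx => ?_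
    by_cases hxC : x ∈ C
    · exact Or.inl (hCV hxC)
    · exact Or.inr ⟨hx, hxC⟩
  calc S W = S (V ∪ (W \ C)) := by rw [hWC]
    _ ≤ S V + S (W \ C) := hsub _ _ hV (hW.sdiff hC)
    _ ≤ S V + ν (W \ C) := by grw [hdom _ (hW.sdiff hC)]
    _ = S V + ν ((W \ V) ∪ (V \ C)) := by rw [sdiff_union_sdiff_cancel hVW hCV]
    _ ≤ S V + (ν (W \ V) + ε) := by grw [measure_union_le, hνC.le]
    _ = S V + ν (W \ V) + ε := (add_assoc _ _ _).symm

theorem apply_iUnion_le_tsum {U : ℕ → Set X} (hU : ∀ n, IsOpen (U n)) :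
    S (⋃ n, U n) ≤ ∑' n, S (U n) := by
  have hW : IsOpen (⋃ n, U n) := isOpen_iUnion hU
  have hbound (n : ℕ) : S (⋃ n, U n) ≤ ∑' n, S (U n) + ν ((⋃ n, U n) \ accumulate U n) :=
    calc S (⋃ n, U n) ≤ S (accumulate U n) + ν ((⋃ n, U n) \ accumulate U n) :=
          apply_le_add_measure_sdiff hsub hdom (isOpen_accumulate hU n) hW
            (accumulate_subset_iUnion n)
      _ ≤ ∑' n, S (U n) + ν ((⋃ n, U n) \ accumulate U n) := by
          grw [apply_accumulate_le_sum hsub hU n, ENNReal.sum_le_tsum]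
  have htail : Tendsto (fun n => ν ((⋃ n, U n) \ accumulate U n)) atTop (𝓝 0) := by
    have hinter : ⋂ n, (⋃ n, U n) \ accumulate U n = ∅ := by
      rw [← sdiff_iUnion, iUnion_accumulate, sdiff_self]
    rw [← measure_empty (μ := ν), ← hinter]
    exact tendsto_measure_iInter_atTop
      (fun n => (hW.measurableSet.diff (isOpen_accumulate hU n).measurableSet).nullMeasurableSet)
      (fun _ _ hmn => sdiff_subset_sdiff_right (monotone_accumulate hmn))
      ⟨0, measure_ne_top ν _⟩
  simpa using ge_of_tendsto' (htail.const_add _) hbound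

end Subadditive

noncomputable def outerMeasure (S : Set X → ℝ≥0∞) (hempty : S ∅ = 0) : OuterMeasure X :=
  inducedOuterMeasure (fun U (_ : IsOpen U) => S U) isOpen_empty hempty

section OuterMeasure

variable (hmono : ∀ A B : Set X, IsOpen A → IsOpen B → A ⊆ B → S A ≤ S B) (hempty : S ∅ = 0)
  (hcount : ∀ U : ℕ → Set X, (∀ n, IsOpen (U n)) → S (⋃ n, U n) ≤ ∑' n, S (U n))
include hmono hcount

theorem outerMeasure_apply_isOpen {U : Set X} (hU : IsOpen U) :
    outerMeasure S hempty U = S U :=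
  inducedOuterMeasure_eq' (fun _ => isOpen_iUnion) (fun _ hU => hcount _ hU)
    (fun _ _ hA hB => hmono _ _ hA hB) hU

theorem outerMeasure_eq_iInf (s : Set X) :
    outerMeasure S hempty s = ⨅ (U : Set X) (_ : IsOpen U) (_ : s ⊆ U), S U :=
  inducedOuterMeasure_eq_iInf (fun _ => isOpen_iUnion) (fun _ hU => hcount _ hU)
    (fun _ _ hA hB => hmono _ _ hA hB) s

end OuterMeasure

end Topological

section EMetric

variable [EMetricSpace X] (hmono : ∀ A B : Set X, IsOpen A → IsOpen B → A ⊆ B → S A ≤ S B)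
  (hempty : S ∅ = 0)
  (hsuper : ∀ A B : Set X, IsOpen A → IsOpen B → A ∩ B = ∅ → S A + S B ≤ S (A ∪ B))
  (hcount : ∀ U : ℕ → Set X, (∀ n, IsOpen (U n)) → S (⋃ n, U n) ≤ ∑' n, S (U n))
include hmono hsuper hcount

theorem isMetric_outerMeasure : (outerMeasure S hempty).IsMetric := by
  intro s t hst
  refine le_antisymm (measure_union_le s t) ?_
  rw [outerMeasure_eq_iInf hmono hempty hcount (s ∪ t)]
  refine le_iInf₂ fun V hV => le_iInf fun hstV => ?_
  obtain ⟨Us, Ut, hUs, hUt, hsUs, htUt, hdisj⟩ := hst.separatedNhds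
  have hVs : IsOpen (V ∩ Us) := hV.inter hUs
  have hVt : IsOpen (V ∩ Ut) := hV.inter hUt
  calc outerMeasure S hempty s + outerMeasure S hempty t
      ≤ outerMeasure S hempty (V ∩ Us) + outerMeasure S hempty (V ∩ Ut) := by
        gcongr
        exacts [subset_inter (subset_union_left.trans hstV) hsUs,
          subset_inter (subset_union_right.trans hstV) htUt]
    _ = S (V ∩ Us) + S (V ∩ Ut) := by
        rw [outerMeasure_apply_isOpen hmono hempty hcount hVs,
          outerMeasure_apply_isOpen hmono hempty hcount hVt]
    _ ≤ S ((V ∩ Us) ∪ (V ∩ Ut)) := hsuper _ _ hVs hVt <|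
        disjoint_iff_inter_eq_empty.1 (hdisj.mono inter_subset_right inter_subset_right)
    _ ≤ S V :=
        hmono _ _ (hVs.union hVt) hV (union_subset inter_subset_left inter_subset_left)

include hempty in
theorem exists_measure_eq_on_isOpen [MeasurableSpace X] [BorelSpace X] :
    ∃ μ : Measure X, ∀ U, IsOpen U → μ U = S U :=
  ⟨(outerMeasure S hempty).toMeasure
      (isMetric_outerMeasure hmono hempty hsuper hcount).le_caratheodory,
    fun _ hU => (toMeasure_apply _ _ hU.measurableSet).trans
      (outerMeasure_apply_isOpen hmono hempty hcount hU)⟩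

end EMetric

end DeGiorgiLetta

/-- De Giorgi–Letta lemma: an increasing set function on the open subsets of a metric
space, vanishing on `∅`, superadditive on disjoint open sets, subadditive on open sets,
and dominated by a finite Borel measure `ν`, extends uniquely to a finite Borel measure
absolutely continuous with respect to `ν`. -/
theorem stmt3 {X : Type*} [MetricSpace X] [MeasurableSpace X] [BorelSpace X]
    (ν : Measure X) [IsFiniteMeasure ν]
    (S : Set X → ℝ≥0∞)
    (hmono : ∀ A B : Set X, IsOpen A → IsOpen B → A ⊆ B → S A ≤ S B)
    (hempty : S ∅ = 0)
    (hsuper : ∀ A B : Set X, IsOpen A → IsOpen B → A ∩ B = ∅ → S A + S B ≤ S (A ∪ B))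
    (hsub : ∀ A B : Set X, IsOpen A → IsOpen B → S (A ∪ B) ≤ S A + S B)
    (hdom : ∀ A : Set X, IsOpen A → S A ≤ ν A) :
    ∃! μ' : Measure X, (∀ A : Set X, IsOpen A → μ' A = S A) ∧ μ' ≪ ν := by
  obtain ⟨μ, hμ⟩ := DeGiorgiLetta.exists_measure_eq_on_isOpen hmono hempty hsuper
    fun _ hU => DeGiorgiLetta.apply_iUnion_le_tsum hsub hdom hU
  have hμν : μ ≤ ν :=
    Measure.le_of_forall_isOpen_le fun U hU => (hμ U hU).trans_le (hdom U hU)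
  have : IsFiniteMeasure μ := isFiniteMeasure_of_le ν hμν
  refine ⟨μ, ⟨hμ, Measure.absolutelyContinuous_of_le hμν⟩, fun μ' hμ' => ?_⟩
  exact (Measure.ext_of_forall_isOpen fun U hU => (hμ U hU).trans (hμ'.1 U hU).symm).symm
end

section
/- Let Z be a reflexive Banach space, V a normed space, j : Z → V a continuous linear injection, and F : Z → [0,∞] a convex function that is continuous with respect to the norm of Z. Assume F is coercive in the sense that for any sequence (z_n) with sup_n F(z_n) < ∞ one has sup_n ‖z_n‖_Z < ∞. Then for every z ∈ Z, the relaxed functional F̄(z) := inf{ liminf_n F(z_n) : z_n ∈ Z, j(z_n) → j(z) in V } equals F(z). -/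
/-!
Taking constant sequences gives `F̄ ≤ F`. Conversely, if `j (z_n) → j z` and `F (z_n) < c`
along a subsequence, coercivity makes that subsequence bounded, so by reflexivity
(Banach–Alaoglu in the bidual) it has a weak cluster point `w`. Applying `j`, which is weakly
continuous, and using that the weak topology of `V` is Hausdorff, `j w = j z`, hence `w = z`.
The sublevel set `{F ≤ c}` is convex and norm-closed, hence weakly closed, so `F z ≤ c`.
-/

open Filter Topology NormedSpace ENNReal

theorem toWeakSpace_symm_mem_of_mapClusterPt {E : Type*} [AddCommGroup E] [Module ℝ E]
    [TopologicalSpace E] [IsTopologicalAddGroup E] [ContinuousSMul ℝ E] [LocallyConvexSpace ℝ E]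
    {S : Set E} (hSconv : Convex ℝ S) (hSclosed : IsClosed S) {u : ℕ → E} (hu : ∀ n, u n ∈ S)
    {w : WeakSpace ℝ E} (hw : MapClusterPt w atTop (toWeakSpace ℝ E ∘ u)) :
    (toWeakSpace ℝ E).symm w ∈ S := by
  have hw_mem : w ∈ closure (toWeakSpace ℝ E '' S) :=
    isClosed_closure.mem_of_mapClusterPt hw
      (.of_forall fun n => subset_closure (Set.mem_image_of_mem _ (hu n)))
  rw [← hSconv.toWeakSpace_closure ℝ, hSclosed.closure_eq] at hw_mem
  obtain ⟨x, hx, rfl⟩ := hw_mem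
  simpa using hx

theorem map_toWeakSpace_symm_eq_of_mapClusterPt {E V : Type*} [AddCommGroup E] [Module ℝ E]
    [TopologicalSpace E] [AddCommGroup V] [Module ℝ V] [TopologicalSpace V] [SeparatingDual ℝ V]
    (j : E →L[ℝ] V) {u : ℕ → E} {w : WeakSpace ℝ E}
    (hw : MapClusterPt w atTop (toWeakSpace ℝ E ∘ u)) {y : V}
    (hlim : Tendsto (j ∘ u) atTop (𝓝 y)) :
    j ((toWeakSpace ℝ E).symm w) = y := by
  have hcluster :
      MapClusterPt (WeakSpace.map j w) atTop (WeakSpace.map j ∘ toWeakSpace ℝ E ∘ u) :=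
    hw.continuousAt_comp (WeakSpace.map j).continuous.continuousAt
  have hweak : Tendsto (toWeakSpace ℝ V ∘ j ∘ u) atTop (𝓝 (toWeakSpace ℝ V y)) :=
    ((toWeakSpaceCLM ℝ V).continuous.tendsto y).comp hlim
  exact (toWeakSpace ℝ V).injective (eq_of_nhds_neBot (hcluster.clusterPt.mono hweak))

theorem convex_setOf_le_of_ennreal_convex {Z : Type*} [AddCommGroup Z] [Module ℝ Z]
    {F : Z → ℝ≥0∞}
    (hconv : ∀ u v : Z, ∀ α : ℝ, 0 ≤ α → α ≤ 1 →
      F (α • u + (1 - α) • v) ≤ ENNReal.ofReal α * F u + ENNReal.ofReal (1 - α) * F v)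
    (c : ℝ≥0∞) : Convex ℝ {u | F u ≤ c} := by
  intro a ha b hb s t hs ht hst
  obtain rfl : t = 1 - s := by linarith
  calc F (s • a + (1 - s) • b) ≤ ENNReal.ofReal s * F a + ENNReal.ofReal (1 - s) * F b :=
        hconv a b s hs (by linarith)
    _ ≤ ENNReal.ofReal s * c + ENNReal.ofReal (1 - s) * c := by gcongr <;> assumption
    _ = c := by
      rw [← add_mul, ← ENNReal.ofReal_add hs ht, add_sub_cancel, ENNReal.ofReal_one, one_mul]

section Reflexive

variable {Z : Type*} [NormedAddCommGroup Z] [NormedSpace ℝ Z]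

theorem exists_mapClusterPt_toWeakSpace_of_bounded
    (hrefl : Function.Surjective (inclusionInDoubleDual ℝ Z))
    {u : ℕ → Z} {M : ℝ} (hM : ∀ n, ‖u n‖ ≤ M) :
    ∃ w : WeakSpace ℝ Z, MapClusterPt w atTop (toWeakSpace ℝ Z ∘ u) := by
  have hbdd : Bornology.IsBounded ((toWeakSpace ℝ Z) ⁻¹' Set.range (toWeakSpace ℝ Z ∘ u)) := by
    rw [Set.range_comp, Set.preimage_image_eq _ (toWeakSpace ℝ Z).injective]
    exact isBounded_iff_forall_norm_le.2 ⟨M, Set.forall_mem_range.2 hM⟩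
  have hcpt := isCompact_closure_of_isBounded ℝ Z _ hbdd (fun Λ _ => by
    obtain ⟨w, hw⟩ := hrefl (WeakDual.toStrongDual Λ)
    exact ⟨toWeakSpace ℝ Z w, hw⟩)
  obtain ⟨w, -, hw⟩ := hcpt.exists_mapClusterPt (f := atTop)
    (tendsto_principal.2 (.of_forall fun n => subset_closure (Set.mem_range_self n)))
  exact ⟨w, hw⟩

theorem mem_of_bounded_of_tendsto_comp {V : Type*} [NormedAddCommGroup V] [NormedSpace ℝ V]
    (hrefl : Function.Surjective (inclusionInDoubleDual ℝ Z))
    {j : Z →L[ℝ] V} (hj : Function.Injective j)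
    {S : Set Z} (hSconv : Convex ℝ S) (hSclosed : IsClosed S)
    {u : ℕ → Z} {M : ℝ} (hM : ∀ n, ‖u n‖ ≤ M) (hu : ∀ n, u n ∈ S)
    {z : Z} (hlim : Tendsto (j ∘ u) atTop (𝓝 (j z))) :
    z ∈ S := by
  obtain ⟨w, hw⟩ := exists_mapClusterPt_toWeakSpace_of_bounded hrefl hM
  rw [← hj (map_toWeakSpace_symm_eq_of_mapClusterPt j hw hlim)]
  exact toWeakSpace_symm_mem_of_mapClusterPt hSconv hSclosed hu hw

theorem le_liminf_of_tendsto_comp {V : Type*} [NormedAddCommGroup V] [NormedSpace ℝ V]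
    (hrefl : Function.Surjective (inclusionInDoubleDual ℝ Z))
    {j : Z →L[ℝ] V} (hj : Function.Injective j) {F : Z → ℝ≥0∞}
    (hconv : ∀ c, Convex ℝ {u | F u ≤ c}) (hlsc : LowerSemicontinuous F)
    (hcoer : ∀ z : ℕ → Z, (⨆ n, F (z n)) < ⊤ → ∃ M : ℝ, ∀ n, ‖z n‖ ≤ M)
    {zs : ℕ → Z} {z : Z} (hzs : Tendsto (j ∘ zs) atTop (𝓝 (j z))) :
    F z ≤ liminf (F ∘ zs) atTop := by
  refine le_of_forall_gt_imp_ge_of_dense fun c hc => ?_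
  rcases eq_or_ne c ⊤ with rfl | hc_top
  · exact le_top
  obtain ⟨φ, hφ_mono, hφ⟩ :=
    extraction_of_frequently_atTop (frequently_lt_of_liminf_lt (by isBoundedDefault) hc)
  obtain ⟨M, hM⟩ := hcoer (zs ∘ φ) ((iSup_le fun k => (hφ k).le).trans_lt hc_top.lt_top)
  exact mem_of_bounded_of_tendsto_comp hrefl hj (hconv c) (hlsc.isClosed_preimage c) hM
    (fun k => (hφ k).le) (hzs.comp hφ_mono.tendsto_atTop)

end Reflexive

theorem stmt5_general {Z V : Type*}
    [NormedAddCommGroup Z] [NormedSpace ℝ Z]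
    [NormedAddCommGroup V] [NormedSpace ℝ V]
    (hrefl : Function.Surjective (inclusionInDoubleDual ℝ Z))
    (j : Z →L[ℝ] V) (hj : Function.Injective j)
    (F : Z → ℝ≥0∞)
    (hconv : ∀ u v : Z, ∀ α : ℝ, 0 ≤ α → α ≤ 1 →
      F (α • u + (1 - α) • v) ≤ ENNReal.ofReal α * F u + ENNReal.ofReal (1 - α) * F v)
    (hcont : Continuous F)
    (hcoer : ∀ z : ℕ → Z, (⨆ n, F (z n)) < ⊤ → ∃ M : ℝ, ∀ n, ‖z n‖ ≤ M) :
    ∀ z : Z,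
      (⨅ (zs : ℕ → Z) (_ : Tendsto (fun n => j (zs n)) atTop (𝓝 (j z))),
        liminf (fun n => F (zs n)) atTop) = F z := by
  intro z
  refine le_antisymm ?_ (le_iInf₂ fun zs hzs => ?_)
  · exact iInf₂_le_of_le (fun _ => z) tendsto_const_nhds (by rw [liminf_const])
  · exact le_liminf_of_tendsto_comp hrefl hj (convex_setOf_le_of_ennreal_convex hconv)
      hcont.lowerSemicontinuous hcoer hzs

/-- If `Z` is a reflexive Banach space, `j : Z → V` a continuous linear injection,
and `F : Z → [0,∞]` is convex, norm-continuous, and coercive (sequences with bounded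
energy are norm-bounded), then the relaxed functional of `F` with respect to
convergence of `j(z_n)` in `V` coincides with `F`. -/
theorem stmt5 {Z V : Type*}
    [NormedAddCommGroup Z] [NormedSpace ℝ Z] [CompleteSpace Z]
    [NormedAddCommGroup V] [NormedSpace ℝ V]
    (hrefl : Function.Surjective (inclusionInDoubleDual ℝ Z))
    (j : Z →L[ℝ] V) (hj : Function.Injective j)
    (F : Z → ℝ≥0∞)
    (hconv : ∀ u v : Z, ∀ α : ℝ, 0 ≤ α → α ≤ 1 →
      F (α • u + (1 - α) • v) ≤ ENNReal.ofReal α * F u + ENNReal.ofReal (1 - α) * F v)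
    (hcont : Continuous F)
    (hcoer : ∀ z : ℕ → Z, (⨆ n, F (z n)) < ⊤ → ∃ M : ℝ, ∀ n, ‖z n‖ ≤ M) :
    ∀ z : Z,
      (⨅ (zs : ℕ → Z) (_ : Tendsto (fun n => j (zs n)) atTop (𝓝 (j z))),
        liminf (fun n => F (zs n)) atTop) = F z :=
  stmt5_general hrefl j hj F hconv hcont hcoer
end
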